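/- Let g₀(x) = (2/π)(1−3x²)/(1+x²)³. Then ∫_ℝ g₀(x)·x²·log|x| dx = −3. -/

import Mathlib

/-!
By evenness the integral is twice the integral over `(0, ∞)`. A direct antiderivative would
involve `arctan x / x`, so instead the substitution `x ↦ x⁻¹` folds `(1, ∞)` onto `(0, 1)`, where
the two pieces combine to `(6 / π) log x (1 - x²) / (1 + x²)²`. This has the elementary
antiderivative `(6 / π) (x log x / (1 + x²) - arctan x)`, so the folded integral is
`(6 / π) (-π / 4) = -3 / 2`.
-/

noncomputable def gzero (x : ℝ) : ℝ := (2 / Real.pi) * (1 - 3 * x^2) / (1 + x^2)^3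

open Real MeasureTheory Set

section InversionFold

variable {E : Type*} [NormedAddCommGroup E] [NormedSpace ℝ E]

lemma image_inv_Ioo_zero_one : (fun x : ℝ => x⁻¹) '' Ioo 0 1 = Ioi 1 := by
  rw [Set.image_inv_eq_inv, inv_Ioo_0_left one_pos, inv_one]

lemma hasDerivWithinAt_inv_Ioo_zero_one :
    ∀ x ∈ Ioo (0 : ℝ) 1, HasDerivWithinAt (fun y : ℝ => y⁻¹) (-(x ^ 2)⁻¹) (Ioo 0 1) x :=
  fun _ hx => (hasDerivAt_inv hx.1.ne').hasDerivWithinAt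

lemma integral_Ioi_one_eq_integral_Ioo_comp_inv (g : ℝ → E) :
    ∫ x in Ioi 1, g x = ∫ x in Ioo 0 1, (x ^ 2)⁻¹ • g x⁻¹ := by
  rw [← image_inv_Ioo_zero_one, integral_image_eq_integral_abs_deriv_smul measurableSet_Ioo
    hasDerivWithinAt_inv_Ioo_zero_one inv_injective.injOn]
  simp only [abs_neg, abs_inv, abs_sq]

lemma integrableOn_Ioi_one_iff_comp_inv (g : ℝ → E) :
    IntegrableOn g (Ioi 1) ↔ IntervalIntegrable (fun x => (x ^ 2)⁻¹ • g x⁻¹) volume 0 1 := by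
  rw [intervalIntegrable_iff_integrableOn_Ioo_of_le zero_le_one, ← image_inv_Ioo_zero_one,
    integrableOn_image_iff_integrableOn_abs_deriv_smul measurableSet_Ioo
    hasDerivWithinAt_inv_Ioo_zero_one inv_injective.injOn]
  simp only [abs_neg, abs_inv, abs_sq]

theorem integral_Ioi_zero_eq_intervalIntegral_add_comp_inv {g : ℝ → E}
    (hg : IntervalIntegrable g volume 0 1)
    (hg_inv : IntervalIntegrable (fun x => (x ^ 2)⁻¹ • g x⁻¹) volume 0 1) :
    ∫ x in Ioi 0, g x = ∫ x in (0 : ℝ)..1, (g x + (x ^ 2)⁻¹ • g x⁻¹) := by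
  rw [intervalIntegral.integral_add hg hg_inv, ← Ioc_union_Ioi_eq_Ioi zero_le_one,
    setIntegral_union (Ioc_disjoint_Ioi le_rfl) measurableSet_Ioi
      ((intervalIntegrable_iff_integrableOn_Ioc_of_le zero_le_one).1 hg)
      ((integrableOn_Ioi_one_iff_comp_inv g).2 hg_inv),
    integral_Ioi_one_eq_integral_Ioo_comp_inv, intervalIntegral.integral_of_le zero_le_one,
    intervalIntegral.integral_of_le zero_le_one, integral_Ioc_eq_integral_Ioo,
    integral_Ioc_eq_integral_Ioo]

end InversionFold

lemma hasDerivAt_mul_log_div_one_add_sq_sub_arctan {x : ℝ} (hx : x ≠ 0) :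
    HasDerivAt (fun y => y * log y / (1 + y ^ 2) - arctan y)
      (log x * ((1 - x ^ 2) / (1 + x ^ 2) ^ 2)) x := by
  have hq : HasDerivAt (fun y : ℝ => 1 + y ^ 2) (2 * x) x := by
    simpa using (hasDerivAt_pow 2 x).const_add 1
  have h := (((hasDerivAt_id x).mul (hasDerivAt_log hx)).div hq (by positivity)).sub
    (hasDerivAt_arctan x)
  refine h.congr_deriv ?_
  simp only [id, Pi.mul_apply]
  field_simp
  ring

lemma intervalIntegrable_log_mul_one_sub_sq_div_one_add_sq_sq :
    IntervalIntegrable (fun x => log x * ((1 - x ^ 2) / (1 + x ^ 2) ^ 2)) volume 0 1 :=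
  intervalIntegral.intervalIntegrable_log'.mul_continuousOn
    ((by fun_prop : Continuous fun x : ℝ => 1 - x ^ 2).continuousOn.div (by fun_prop)
      fun x _ => by positivity)

-- Since `log 0 = 0`, the antiderivative `x log x / (1 + x²) - arctan x` is continuous at `0`.
theorem intervalIntegral_log_mul_one_sub_sq_div_one_add_sq_sq :
    ∫ x in (0 : ℝ)..1, log x * ((1 - x ^ 2) / (1 + x ^ 2) ^ 2) = -(π / 4) := by
  rw [intervalIntegral.integral_eq_sub_of_hasDerivAt_of_le zero_le_one
    ((continuous_mul_log.div (by fun_prop) fun x => by positivity).sub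
      continuous_arctan).continuousOn
    (fun x hx => hasDerivAt_mul_log_div_one_add_sq_sub_arctan hx.1.ne')
    intervalIntegrable_log_mul_one_sub_sq_div_one_add_sq_sq]
  simp

lemma continuous_gzero : Continuous gzero := by
  unfold gzero
  exact Continuous.div (by fun_prop) (by fun_prop) fun x => by positivity

lemma continuous_gzero_mul_sq_mul_log : Continuous fun x => gzero x * x ^ 2 * log |x| := by
  have h : (fun x => gzero x * x ^ 2 * log |x|) = fun x => gzero x * x * (x * log x) := by
    funext x
    rw [log_abs]
    ring
  rw [h]
  exact (continuous_gzero.mul continuous_id).mul continuous_mul_log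

lemma gzero_mul_sq_mul_log_add_comp_inv (x : ℝ) :
    gzero x * x ^ 2 * log |x| + (x ^ 2)⁻¹ • (gzero x⁻¹ * x⁻¹ ^ 2 * log |x⁻¹|) =
      6 / π * (log x * ((1 - x ^ 2) / (1 + x ^ 2) ^ 2)) := by
  rcases eq_or_ne x 0 with rfl | hx
  · simp
  rw [smul_eq_mul, log_abs, log_abs, log_inv]
  unfold gzero
  field_simp
  ring

theorem stmt_8 : (∫ x : ℝ, gzero x * x^2 * Real.log |x|) = -3 := by
  set f : ℝ → ℝ := fun x => gzero x * x ^ 2 * log |x| with hf_def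
  have hf_even : ∀ x, f |x| = f x := fun x => by simp only [hf_def, gzero, abs_abs, sq_abs]
  have hf : IntervalIntegrable f volume 0 1 :=
    continuous_gzero_mul_sq_mul_log.intervalIntegrable 0 1
  have hfold : (fun x => f x + (x ^ 2)⁻¹ • f x⁻¹) =
      fun x => 6 / π * (log x * ((1 - x ^ 2) / (1 + x ^ 2) ^ 2)) :=
    funext gzero_mul_sq_mul_log_add_comp_inv
  have hf_inv : IntervalIntegrable (fun x => (x ^ 2)⁻¹ • f x⁻¹) volume 0 1 := by
    have hsum : IntervalIntegrable (fun x => f x + (x ^ 2)⁻¹ • f x⁻¹) volume 0 1 := by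
      rw [hfold]
      exact intervalIntegrable_log_mul_one_sub_sq_div_one_add_sq_sq.const_mul _
    simpa using hsum.sub hf
  calc ∫ x, f x = 2 * ∫ x in Ioi 0, f x := by simp only [← integral_comp_abs, hf_even]
    _ = 2 * ∫ x in (0 : ℝ)..1, 6 / π * (log x * ((1 - x ^ 2) / (1 + x ^ 2) ^ 2)) := by
      rw [integral_Ioi_zero_eq_intervalIntegral_add_comp_inv hf hf_inv, hfold]
    _ = -3 := by
      rw [intervalIntegral.integral_const_mul,
        intervalIntegral_log_mul_one_sub_sq_div_one_add_sq_sq]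
      field_simp
      ring
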